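/- arXiv:math/0402191 — 2 statements merged into one kernel-verified Lean document; each statement's English description precedes it below -/
import Mathlib

section
/- For all nonzero vectors u, v in a real inner product space (in particular in ℝ⁴), one has |u+v| − | |u| − |v| | ≥ π^{−2} · min(|u|,|v|) · ∠(u,−v)², where ∠(u,−v) is the angle between u and −v. Equivalently, two concentric waves whose space-time frequencies add to a point at distance d from the light cone must interact at angle O(√(d / min(|u|,|v|))). -/
/-!
With `θ = ∠(u, -v)`, the law of cosines gives
`‖u + v‖² - (‖u‖ - ‖v‖)² = 2 ‖u‖ ‖v‖ (1 - cos θ)`. Dividing by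
`‖u + v‖ + |‖u‖ - ‖v‖| ≤ 2 max ‖u‖ ‖v‖` leaves at least `min ‖u‖ ‖v‖ · (1 - cos θ) / 2`,
and Jordan's inequality `1 - cos θ ≥ 2 θ² / π²` finishes.
-/

open Real InnerProductGeometry

theorem min_mul_le_two_mul_sub_abs_sub {a b c t : ℝ} (ha : 0 ≤ a) (hb : 0 ≤ b) (hc : 0 ≤ c)
    (ht₀ : 0 ≤ t) (ht₂ : t ≤ 2) (hsq : c ^ 2 = (a - b) ^ 2 + 2 * a * b * t) :
    min a b * t ≤ 2 * (c - |a - b|) := by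
  wlog hab : b ≤ a generalizing a b
  · simpa [min_comm, abs_sub_comm, mul_right_comm a b] using
      this hb ha (by linarith) (by linarith)
  rw [min_eq_right hab, abs_of_nonneg (sub_nonneg.2 hab)]
  have hca : c ≤ a + b :=
    le_of_sq_le_sq (by nlinarith [mul_nonneg (mul_nonneg ha hb) (sub_nonneg.2 ht₂)]) (by linarith)
  have hcd : a - b ≤ c := le_of_sq_le_sq (by nlinarith [mul_nonneg (mul_nonneg ha hb) ht₀]) hc
  -- `(c - (a - b)) * (c + (a - b)) = 2abt` and `c + (a - b) ≤ 2a`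
  nlinarith [mul_nonneg (sub_nonneg.2 hcd) (by linarith : 0 ≤ 2 * a - (c + (a - b))),
    mul_nonneg (mul_nonneg hb ht₀) (sub_nonneg.2 hab),
    mul_nonneg (mul_nonneg ha hb) ht₀]

theorem norm_add_sq_eq_sq_sub_add_one_sub_cos_angle_neg {E : Type*} [NormedAddCommGroup E]
    [InnerProductSpace ℝ E] (u v : E) :
    ‖u + v‖ ^ 2 = (‖u‖ - ‖v‖) ^ 2 + 2 * ‖u‖ * ‖v‖ * (1 - cos (angle u (-v))) := by
  have := norm_sub_sq_eq_norm_sq_add_norm_sq_sub_two_mul_norm_mul_norm_mul_cos_angle u (-v)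
  rw [sub_neg_eq_add, norm_neg] at this
  linear_combination this

theorem statement13_general {E : Type*} [NormedAddCommGroup E] [InnerProductSpace ℝ E]
    (u v : E) :
    ‖u + v‖ - |‖u‖ - ‖v‖| ≥
      (Real.pi ^ 2)⁻¹ * min ‖u‖ ‖v‖ * (InnerProductGeometry.angle u (-v)) ^ 2 := by
  set θ := angle u (-v)
  have hjordan : cos θ ≤ 1 - 2 / π ^ 2 * θ ^ 2 := cos_le_one_sub_mul_cos_sq <| by
    rw [abs_of_nonneg (angle_nonneg u (-v))]; exact angle_le_pi u (-v)
  have hgap := min_mul_le_two_mul_sub_abs_sub (norm_nonneg u) (norm_nonneg v)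
    (norm_nonneg (u + v)) (by linarith [cos_le_one θ]) (by linarith [neg_one_le_cos θ])
    (norm_add_sq_eq_sq_sub_add_one_sub_cos_angle_neg u v)
  calc (π ^ 2)⁻¹ * min ‖u‖ ‖v‖ * θ ^ 2 = min ‖u‖ ‖v‖ * (2 / π ^ 2 * θ ^ 2) / 2 := by ring
    _ ≤ min ‖u‖ ‖v‖ * (1 - cos θ) / 2 := by gcongr; linarith
    _ ≤ _ := by linarith

/-- For all nonzero vectors `u, v` in a real inner product space, one has
`‖u+v‖ − |‖u‖ − ‖v‖| ≥ π⁻² · min(‖u‖,‖v‖) · ∠(u,−v)²`, where `∠(u,−v)` is the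
(unoriented) angle between `u` and `−v`. -/
theorem statement13 {E : Type*} [NormedAddCommGroup E] [InnerProductSpace ℝ E]
    (u v : E) (hu : u ≠ 0) (hv : v ≠ 0) :
    ‖u + v‖ - |‖u‖ - ‖v‖| ≥
      (Real.pi ^ 2)⁻¹ * min ‖u‖ ‖v‖ * (InnerProductGeometry.angle u (-v)) ^ 2 :=
  statement13_general u v
end

section
/- Let δ, d > 0 with δ ≤ d, and let (τ,ξ), (τ',ξ') ∈ ℝ × ℝ⁴ with ξ ≠ 0, ξ' ≠ 0, τ ≤ 0 ≤ τ'. Assume both points lie within δ of the light cone, i.e. | |τ| − |ξ| | ≤ δ and | |τ'| − |ξ'| | ≤ δ, and that the output lies at distance about d from the cone, i.e. | |τ+τ'| − |ξ+ξ'| | ≤ d. Then the interaction angle is small: ∠(ξ, −ξ')² ≤ 3π² · d / min(|ξ|, |ξ'|). -/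
/-!
Write `a = ‖ξ‖`, `b = ‖ξ'‖`, `s = ‖ξ + ξ'‖` and `θ = ∠(ξ, -ξ')`. Since `τ` and `τ'` have opposite
signs, `|τ + τ'| = ||τ'| - |τ||` is within `2δ` of `|a - b|`, so the output condition forces
`s - |a - b| ≤ d + 2δ ≤ 3d`. On the other hand `s² - (a - b)² = 2ab(1 - cos θ)`, and since
`s + |a - b| ≤ 2 max(a, b)` this gives `min(a, b) (1 - cos θ) ≤ s - |a - b|`. Finally
`1 - cos θ ≥ 2θ²/π²` on `[-π, π]`.
-/

open Real InnerProductGeometry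

theorem Real.sq_le_pi_sq_div_two_mul_one_sub_cos {θ : ℝ} (hθ : |θ| ≤ π) :
    θ ^ 2 ≤ π ^ 2 / 2 * (1 - cos θ) := by
  have hcos := cos_le_one_sub_mul_cos_sq hθ
  have hπ : 0 < π ^ 2 := by positivity
  calc θ ^ 2 = π ^ 2 / 2 * (2 / π ^ 2 * θ ^ 2) := by field_simp
    _ ≤ π ^ 2 / 2 * (1 - cos θ) := by gcongr; linarith

theorem InnerProductGeometry.min_norm_mul_one_sub_cos_angle_neg_le {V : Type*}
    [NormedAddCommGroup V] [InnerProductSpace ℝ V] (x y : V) :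
    min ‖x‖ ‖y‖ * (1 - cos (angle x (-y))) ≤ ‖x + y‖ - |‖x‖ - ‖y‖| := by
  set c := cos (angle x (-y))
  have hgap : 0 ≤ ‖x + y‖ - |‖x‖ - ‖y‖| := by
    simpa [sub_neg_eq_add] using sub_nonneg.2 (abs_norm_sub_norm_le x (-y))
  have hsq : 2 * (‖x‖ * ‖y‖ * (1 - c)) = ‖x + y‖ ^ 2 - (‖x‖ - ‖y‖) ^ 2 := by
    have hinner := cos_angle_mul_norm_mul_norm x (-y)
    rw [norm_neg, inner_neg_right] at hinner
    rw [norm_add_sq_real]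
    linear_combination (-2) * hinner
  have hsum : ‖x + y‖ + |‖x‖ - ‖y‖| ≤ 2 * max ‖x‖ ‖y‖ := by
    linarith [norm_add_le x y, min_add_max ‖x‖ ‖y‖, max_sub_min_eq_abs' ‖x‖ ‖y‖]
  have hc : 0 ≤ 1 - c := sub_nonneg.2 (cos_le_one _)
  rcases (le_max_of_le_left (norm_nonneg x) : 0 ≤ max ‖x‖ ‖y‖).eq_or_lt with hmax | hmax
  · have hmin : min ‖x‖ ‖y‖ = 0 :=
      le_antisymm (hmax ▸ min_le_max) (le_min (norm_nonneg x) (norm_nonneg y))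
    simpa [hmin] using hgap
  · refine le_of_mul_le_mul_right ?_ hmax
    have hprod : (‖x + y‖ - |‖x‖ - ‖y‖|) * (‖x + y‖ + |‖x‖ - ‖y‖|) ≤
        (‖x + y‖ - |‖x‖ - ‖y‖|) * (2 * max ‖x‖ ‖y‖) :=
      mul_le_mul_of_nonneg_left hsum hgap
    rw [mul_right_comm, min_mul_max]
    nlinarith [sq_abs (‖x‖ - ‖y‖)]

theorem sub_abs_sub_le_of_near_light_cone {τ τ' a b s δ d : ℝ} (hτ : τ ≤ 0) (hτ' : 0 ≤ τ')
    (ha : |(|τ| - a)| ≤ δ) (hb : |(|τ'| - b)| ≤ δ) (hs : |(|τ + τ'| - s)| ≤ d) :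
    s - |a - b| ≤ d + 2 * δ := by
  rw [abs_of_nonpos hτ] at ha
  rw [abs_of_nonneg hτ'] at hb
  rw [abs_le] at ha hb hs
  cases abs_cases (τ + τ') <;> cases abs_cases (a - b) <;> linarith

theorem statement14_general (δ d : ℝ) (hd : 0 < d) (hδd : δ ≤ d)
    (τ τ' : ℝ) (ξ ξ' : EuclideanSpace ℝ (Fin 4))
    (hξ : ξ ≠ 0) (hξ' : ξ' ≠ 0) (hτ : τ ≤ 0) (hτ' : 0 ≤ τ')
    (hcone : |(|τ| - ‖ξ‖)| ≤ δ) (hcone' : |(|τ'| - ‖ξ'‖)| ≤ δ)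
    (hout : |(|τ + τ'| - ‖ξ + ξ'‖)| ≤ d) :
    (InnerProductGeometry.angle ξ (-ξ')) ^ 2 ≤
      3 * Real.pi ^ 2 * d / min ‖ξ‖ ‖ξ'‖ := by
  set θ := angle ξ (-ξ')
  have hmin : 0 < min ‖ξ‖ ‖ξ'‖ := lt_min (norm_pos_iff.2 hξ) (norm_pos_iff.2 hξ')
  have hθ : θ ^ 2 ≤ π ^ 2 / 2 * (1 - cos θ) :=
    sq_le_pi_sq_div_two_mul_one_sub_cos ((abs_of_nonneg (angle_nonneg _ _)).trans_le
      (angle_le_pi _ _))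
  have hgap : min ‖ξ‖ ‖ξ'‖ * (1 - cos θ) ≤ 3 * d :=
    (min_norm_mul_one_sub_cos_angle_neg_le ξ ξ').trans <|
      (sub_abs_sub_le_of_near_light_cone hτ hτ' hcone hcone' hout).trans (by linarith)
  rw [le_div_iff₀ hmin]
  calc θ ^ 2 * min ‖ξ‖ ‖ξ'‖ ≤ π ^ 2 / 2 * (min ‖ξ‖ ‖ξ'‖ * (1 - cos θ)) := by
        linarith [mul_le_mul_of_nonneg_right hθ hmin.le]
    _ ≤ π ^ 2 / 2 * (3 * d) := by gcongr
    _ ≤ 3 * π ^ 2 * d := by linarith [mul_nonneg (sq_nonneg π) hd.le]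

/-- If `(τ,ξ)` and `(τ',ξ')`, with `τ ≤ 0 ≤ τ'`, both lie within `δ ≤ d`
of the light cone in `ℝ × ℝ⁴`, and their sum lies within `d` of the light cone, then the
interaction angle satisfies `∠(ξ, −ξ')² ≤ 3π² d / min(|ξ|, |ξ'|)`. -/
theorem statement14 (δ d : ℝ) (hδ : 0 < δ) (hd : 0 < d) (hδd : δ ≤ d)
    (τ τ' : ℝ) (ξ ξ' : EuclideanSpace ℝ (Fin 4))
    (hξ : ξ ≠ 0) (hξ' : ξ' ≠ 0) (hτ : τ ≤ 0) (hτ' : 0 ≤ τ')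
    (hcone : |(|τ| - ‖ξ‖)| ≤ δ) (hcone' : |(|τ'| - ‖ξ'‖)| ≤ δ)
    (hout : |(|τ + τ'| - ‖ξ + ξ'‖)| ≤ d) :
    (InnerProductGeometry.angle ξ (-ξ')) ^ 2 ≤
      3 * Real.pi ^ 2 * d / min ‖ξ‖ ‖ξ'‖ :=
  statement14_general δ d hd hδd τ τ' ξ ξ' hξ hξ' hτ hτ' hcone hcone' hout
end
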